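/- arXiv:1301.6345 — 4 statements merged into one kernel-verified Lean document; each statement's English description precedes it below -/
import Mathlib

section
/- Let 0 < P ≤ Λ and σ² ≥ 0. For every blocklength n ≥ 1 and every stochastic code of blocklength n with M ≥ 2 messages and power constraint P, there exists a jamming vector s ∈ ℝⁿ with ‖s‖² ≤ nΛ such that max_{1 ≤ i ≤ M} e(s,i) ≥ 1/4. -/
open MeasureTheory ProbabilityTheory Real Filter
open scoped InnerProductSpace ENNReal NNReal

/-- Law of a vector of `n` i.i.d. centered Gaussian coordinates of variance `v`,
as a measure on `EuclideanSpace ℝ (Fin n)`. -/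
noncomputable def gaussianVec (n : ℕ) (v : ℝ) : Measure (EuclideanSpace ℝ (Fin n)) :=
  (Measure.pi fun _ : Fin n => gaussianReal 0 v.toNNReal).map
    (MeasurableEquiv.toLp 2 (Fin n → ℝ))

/-- The uniform (rotation-invariant) probability measure on the sphere of radius `r`
centered at the origin of `ℝⁿ`. -/
noncomputable def sphereUniform (n : ℕ) (r : ℝ) : Measure (EuclideanSpace ℝ (Fin n)) :=
  (((volume : Measure (EuclideanSpace ℝ (Fin n))).toSphere Set.univ)⁻¹ •
      (volume : Measure (EuclideanSpace ℝ (Fin n))).toSphere).map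
    (fun x : Metric.sphere (0 : EuclideanSpace ℝ (Fin n)) 1 =>
      r • (x : EuclideanSpace ℝ (Fin n)))

/-- The uniform probability measure on `Fin N`. -/
noncomputable def uniformFin (N : ℕ) : Measure (Fin N) :=
  ((N : ℝ≥0∞))⁻¹ • Measure.count

/-!
Symmetrization. Fix two messages `a ≠ b` and let the jammer transmit an independent copy of the
codeword of `b` while `a` is sent (and vice versa). Averaged over both codewords and the noise,
the channel output `X_a + X_b + V` has the same law in both experiments, and the decoder cannot
output both `a` and `b` on it, so the two averaged success probabilities add up to at most `1`.
Hence one of the two averaged error probabilities is at least `1/2`, and some realization `s` of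
the jamming codeword, which obeys the power constraint `‖s‖² ≤ nP ≤ nΛ`, achieves it.
-/

instance isProbabilityMeasure_gaussianVec (n : ℕ) (v : ℝ) :
    IsProbabilityMeasure (gaussianVec n v) :=
  Measure.isProbabilityMeasure_map (MeasurableEquiv.measurable _).aemeasurable

section Symmetrization

variable {E : Type*} [MeasurableSpace E] [AddCommMonoid E] {μ μ' ν : Measure E} {A B : Set E}

/-- With `A = {y | φ y ≠ i + 1}`, `hitProb (μ i) ν A s` is the error probability `e(s, i)`. -/
noncomputable def hitProb (μ ν : Measure E) (A : Set E) (s : E) : ℝ≥0∞ :=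
  (μ.prod ν) {p | p.1 + s + p.2 ∈ A}

theorem exists_mem_lintegral_hitProb_le [IsProbabilityMeasure μ] [IsProbabilityMeasure μ']
    [IsProbabilityMeasure ν] {S : Set E} (hS : MeasurableSet S) (hμ'S : μ' S = 1) :
    ∃ s ∈ S, ∫⁻ s, hitProb μ ν A s ∂μ' ≤ hitProb μ ν A s := by
  obtain ⟨s, hs, hle⟩ := exists_notMem_null_lintegral_le
    (ne_top_of_le_ne_top (by simp) (lintegral_mono fun s => prob_le_one (μ := μ.prod ν)
      (s := {p | p.1 + s + p.2 ∈ A})))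
    ((prob_compl_eq_zero_iff hS).2 hμ'S)
  exact ⟨s, not_not.1 hs, hle⟩

variable [MeasurableAdd₂ E]

theorem measurable_measure_add_mem [SFinite ν] (hA : MeasurableSet A) :
    Measurable fun y : E => ν {v | y + v ∈ A} :=
  measurable_measure_prodMk_left (measurable_add hA)

theorem hitProb_eq_lintegral [SFinite ν] (hA : MeasurableSet A) (s : E) :
    hitProb μ ν A s = ∫⁻ x, ν {v | x + s + v ∈ A} ∂μ :=
  Measure.prod_apply (((measurable_fst.add_const s).add measurable_snd) hA)

theorem measurable_hitProb [SFinite μ] [SFinite ν] (hA : MeasurableSet A) :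
    Measurable (hitProb μ ν A) := by
  simp_rw [funext (hitProb_eq_lintegral (μ := μ) (ν := ν) hA)]
  exact Measurable.lintegral_prod_right
    ((measurable_measure_add_mem hA).comp (measurable_snd.add measurable_fst))

theorem lintegral_hitProb_add_lintegral_hitProb_compl [IsProbabilityMeasure μ]
    [IsProbabilityMeasure μ'] [IsProbabilityMeasure ν] (hA : MeasurableSet A) :
    ∫⁻ s, hitProb μ ν A s ∂μ' + ∫⁻ s, hitProb μ ν Aᶜ s ∂μ' = 1 := by
  have hsum : ∀ s, hitProb μ ν A s + hitProb μ ν Aᶜ s = 1 := fun s =>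
    prob_add_prob_compl (((measurable_fst.add_const s).add measurable_snd) hA)
  rw [← lintegral_add_left (measurable_hitProb hA)]
  simp [hsum]

theorem lintegral_hitProb_add_lintegral_hitProb_le_one [IsProbabilityMeasure μ]
    [IsProbabilityMeasure μ'] [IsProbabilityMeasure ν] (hA : MeasurableSet A)
    (hB : MeasurableSet B) (hAB : Disjoint A B) :
    ∫⁻ s, hitProb μ ν A s ∂μ' + ∫⁻ s, hitProb μ' ν B s ∂μ ≤ 1 := by
  have hle : ∀ y : E, ν {v | y + v ∈ A} + ν {v | y + v ∈ B} ≤ 1 := fun y =>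
    calc _ = ν ({v | y + v ∈ A} ∪ {v | y + v ∈ B}) :=
          (measure_union (hAB.preimage (y + ·)) (measurable_const_add y hB)).symm
      _ ≤ 1 := prob_le_one
  calc ∫⁻ s, hitProb μ ν A s ∂μ' + ∫⁻ s, hitProb μ' ν B s ∂μ
      = ∫⁻ s, ∫⁻ x, ν {v | x + s + v ∈ A} ∂μ ∂μ'
          + ∫⁻ x, ∫⁻ s, ν {v | s + x + v ∈ B} ∂μ' ∂μ := by
        simp_rw [hitProb_eq_lintegral hA, hitProb_eq_lintegral hB]
    _ = ∫⁻ x, ∫⁻ s, ν {v | x + s + v ∈ A} ∂μ' ∂μ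
          + ∫⁻ x, ∫⁻ s, ν {v | x + s + v ∈ B} ∂μ' ∂μ := by
        rw [lintegral_lintegral_swap (f := fun s x => ν {v | x + s + v ∈ A})
          ((measurable_measure_add_mem hA).comp (measurable_snd.add measurable_fst)).aemeasurable]
        simp_rw [add_comm _ (_ : E)]
    _ = ∫⁻ x, ∫⁻ s, ν {v | x + s + v ∈ A} + ν {v | x + s + v ∈ B} ∂μ' ∂μ := by
        rw [← lintegral_add_left (Measurable.lintegral_prod_right
          (f := fun x s => ν {v | x + s + v ∈ A})
          ((measurable_measure_add_mem hA).comp measurable_add))]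
        exact lintegral_congr fun x => (lintegral_add_left
          ((measurable_measure_add_mem hA).comp (measurable_const_add x)) _).symm
    _ ≤ ∫⁻ _, ∫⁻ _, 1 ∂μ' ∂μ := lintegral_mono fun x => lintegral_mono fun s => hle (x + s)
    _ = 1 := by simp

theorem one_le_lintegral_hitProb_compl_add [IsProbabilityMeasure μ] [IsProbabilityMeasure μ']
    [IsProbabilityMeasure ν] (hA : MeasurableSet A) (hB : MeasurableSet B) (hAB : Disjoint A B) :
    1 ≤ ∫⁻ s, hitProb μ ν Aᶜ s ∂μ' + ∫⁻ s, hitProb μ' ν Bᶜ s ∂μ := by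
  refine ENNReal.le_of_add_le_add_left ENNReal.one_ne_top ?_
  calc 1 + 1
      = (∫⁻ s, hitProb μ ν A s ∂μ' + ∫⁻ s, hitProb μ ν Aᶜ s ∂μ')
          + (∫⁻ s, hitProb μ' ν B s ∂μ + ∫⁻ s, hitProb μ' ν Bᶜ s ∂μ) := by
        rw [lintegral_hitProb_add_lintegral_hitProb_compl hA,
          lintegral_hitProb_add_lintegral_hitProb_compl hB]
    _ = (∫⁻ s, hitProb μ ν A s ∂μ' + ∫⁻ s, hitProb μ' ν B s ∂μ)
          + (∫⁻ s, hitProb μ ν Aᶜ s ∂μ' + ∫⁻ s, hitProb μ' ν Bᶜ s ∂μ) := by ring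
    _ ≤ 1 + (∫⁻ s, hitProb μ ν Aᶜ s ∂μ' + ∫⁻ s, hitProb μ' ν Bᶜ s ∂μ) := by
        gcongr
        exact lintegral_hitProb_add_lintegral_hitProb_le_one hA hB hAB

end Symmetrization

theorem ENNReal.half_le_or_half_le_of_one_le_add {a b : ℝ≥0∞} (h : 1 ≤ a + b) :
    1 / 2 ≤ a ∨ 1 / 2 ≤ b := by
  by_contra! hab
  exact (ENNReal.add_lt_add hab.1 hab.2).not_ge (by rwa [ENNReal.add_halves])

theorem stmt1_general (P Λ σ2 : ℝ) (hPΛ : P ≤ Λ)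
    (n M : ℕ) (hM : 2 ≤ M)
    (μ : Fin M → Measure (EuclideanSpace ℝ (Fin n)))
    (φ : EuclideanSpace ℝ (Fin n) → ℕ)
    (hprob : ∀ i, IsProbabilityMeasure (μ i))
    (hsupp : ∀ i, μ i {x | ‖x‖ ^ 2 ≤ n * P} = 1)
    (hφ : Measurable φ) :
    ∃ s : EuclideanSpace ℝ (Fin n), ‖s‖ ^ 2 ≤ n * Λ ∧
      ∃ i : Fin M,
        1 / 4 ≤ (((μ i).prod (gaussianVec n σ2))
            {p | φ (p.1 + s + p.2) ≠ i.val + 1}).toReal := by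
  let D : Fin M → Set (EuclideanSpace ℝ (Fin n)) := fun i => {y | φ y = i.val + 1}
  have hD : ∀ i, MeasurableSet (D i) := fun i => hφ (measurableSet_singleton _)
  have hdisj : Disjoint (D ⟨0, by omega⟩) (D ⟨1, by omega⟩) :=
    Set.disjoint_left.2 fun y h₀ h₁ => by simp_all [D]
  obtain ⟨a, b, hab⟩ : ∃ a b : Fin M,
      1 / 2 ≤ ∫⁻ s, hitProb (μ a) (gaussianVec n σ2) (D a)ᶜ s ∂(μ b) :=
    (ENNReal.half_le_or_half_le_of_one_le_add
      (one_le_lintegral_hitProb_compl_add (hD _) (hD _) hdisj)).elim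
      (fun h => ⟨_, _, h⟩) (fun h => ⟨_, _, h⟩)
  obtain ⟨s, hs, hle⟩ := exists_mem_lintegral_hitProb_le (A := (D a)ᶜ) (μ := μ a)
    (ν := gaussianVec n σ2) (measurableSet_le (by fun_prop) measurable_const) (hsupp b)
  refine ⟨s, hs.trans (by gcongr), a, ?_⟩
  calc (1 / 4 : ℝ) ≤ (1 / 2 : ℝ≥0∞).toReal := by norm_num
    _ ≤ (hitProb (μ a) (gaussianVec n σ2) (D a)ᶜ s).toReal :=
        ENNReal.toReal_mono (measure_ne_top _ _) (hab.trans hle)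

/-- Converse (symmetrizability) for `P ≤ Λ`: every stochastic code of
blocklength `n ≥ 1` with `M ≥ 2` messages and power constraint `P` admits a jamming vector
`s` with `‖s‖² ≤ nΛ` for which the maximum (over messages) error probability is at
least `1/4`. The decoder `φ` outputs values in `{0,…,M}`, with `0` denoting an error and
message `i : Fin M` corresponding to output `i+1`. -/
theorem stmt1 (P Λ σ2 : ℝ) (hP : 0 < P) (hPΛ : P ≤ Λ) (hσ : 0 ≤ σ2)
    (n M : ℕ) (hn : 1 ≤ n) (hM : 2 ≤ M)
    (μ : Fin M → Measure (EuclideanSpace ℝ (Fin n)))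
    (φ : EuclideanSpace ℝ (Fin n) → ℕ)
    (hprob : ∀ i, IsProbabilityMeasure (μ i))
    (hsupp : ∀ i, μ i {x | ‖x‖ ^ 2 ≤ n * P} = 1)
    (hφ : Measurable φ) (hφM : ∀ y, φ y ≤ M) :
    ∃ s : EuclideanSpace ℝ (Fin n), ‖s‖ ^ 2 ≤ n * Λ ∧
      ∃ i : Fin M,
        1 / 4 ≤ (((μ i).prod (gaussianVec n σ2))
            {p | φ (p.1 + s + p.2) ≠ i.val + 1}).toReal :=
  stmt1_general P Λ σ2 hPΛ n M hM μ φ hprob hsupp hφ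
end

section
/- Let X₁,…,X_L be random variables on a probability space, and for each i ∈ {1,…,L} let f_i be a measurable function of i real arguments with 0 ≤ f_i ≤ 1. If, for some a > 0 and every i, the conditional expectation satisfies E[ f_i(X₁,…,X_i) | X₁,…,X_{i−1} ] ≤ a almost surely, then Pr[ (1/L)·Σ_{i=1}^{L} f_i(X₁,…,X_i) > τ ] ≤ exp( −L(τ·ln 2 − a) ) for every τ > 0. -/
/-! By convexity of `exp`, `2 ^ x ≤ 1 + x` on `[0, 1]`, so the hypothesis
`E[fᵢ | X₁,…,X_{i-1}] ≤ a` gives `E[2 ^ fᵢ | X₁,…,X_{i-1}] ≤ 1 + a`. The partial product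
`2 ^ (f₁ + ⋯ + f_{i-1})` is `σ(X₁,…,X_{i-1})`-measurable, so conditioning peels off one factor
at a time: `E[2 ^ (f₁ + ⋯ + f_L)] ≤ (1 + a) ^ L ≤ e ^ {aL}`. Markov's inequality at level
`2 ^ {Lτ}` concludes. -/

open MeasureTheory ProbabilityTheory Real Filter
open scoped InnerProductSpace ENNReal NNReal

lemma Real.exp_mul_le_one_add_mul (t : ℝ) {x : ℝ} (hx0 : 0 ≤ x) (hx1 : x ≤ 1) :
    exp (t * x) ≤ 1 + (exp t - 1) * x := by
  have h := convexOn_exp.2 (Set.mem_univ 0) (Set.mem_univ t) (sub_nonneg.2 hx1) hx0 (by ring)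
  simp only [smul_eq_mul, mul_zero, zero_add, exp_zero] at h
  rw [mul_comm t x]
  linarith

section

variable {Ω : Type*} {m mΩ : MeasurableSpace Ω} {μ : Measure Ω}

lemma condExp_exp_mul_le [IsFiniteMeasure μ] (hm : m ≤ mΩ) {t a : ℝ} (ht : 0 ≤ t)
    {G : Ω → ℝ} (hG : Measurable G) (hG0 : ∀ ω, 0 ≤ G ω) (hG1 : ∀ ω, G ω ≤ 1)
    (hGa : μ[G|m] ≤ᵐ[μ] fun _ => a) :
    μ[fun ω => exp (t * G ω)|m] ≤ᵐ[μ] fun _ => 1 + (exp t - 1) * a := by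
  have hG_int : Integrable G μ :=
    .of_mem_Icc 0 1 hG.aemeasurable (.of_forall fun ω => ⟨hG0 ω, hG1 ω⟩)
  have hlin : μ[fun ω => 1 + (exp t - 1) * G ω|m] =ᵐ[μ]
      fun ω => 1 + (exp t - 1) * (μ[G|m]) ω := by
    refine (condExp_add (integrable_const 1) (hG_int.const_mul _) m).trans ?_
    filter_upwards [condExp_smul (exp t - 1) G m] with ω hω
    rw [condExp_const hm, Pi.add_apply]
    exact congrArg (1 + ·) hω
  have hmono := condExp_mono (m := m)
    (integrable_exp_mul_of_le t 1 ht hG.aemeasurable (.of_forall hG1))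
    ((integrable_const 1).add (hG_int.const_mul (exp t - 1)))
    (.of_forall fun ω => exp_mul_le_one_add_mul t (hG0 ω) (hG1 ω))
  have hexp : 0 ≤ exp t - 1 := by linarith [one_le_exp ht]
  filter_upwards [hmono, hlin, hGa] with ω h1 h2 h3
  calc _ ≤ _ := h1
    _ = _ := h2
    _ ≤ 1 + (exp t - 1) * a := by gcongr

lemma integral_mul_le_of_condExp_le [IsFiniteMeasure μ] (hm : m ≤ mΩ) {P e : Ω → ℝ} {c : ℝ}
    (hP : StronglyMeasurable[m] P) (hP0 : 0 ≤ᵐ[μ] P) (hP_int : Integrable P μ)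
    (hPe_int : Integrable (P * e) μ) (he_int : Integrable e μ) (hce : μ[e|m] ≤ᵐ[μ] fun _ => c) :
    ∫ ω, (P * e) ω ∂μ ≤ c * ∫ ω, P ω ∂μ := by
  have hpull := condExp_mul_of_stronglyMeasurable_left hP hPe_int he_int
  calc ∫ ω, (P * e) ω ∂μ = ∫ ω, (μ[P * e|m]) ω ∂μ := (integral_condExp hm).symm
    _ = ∫ ω, (P * μ[e|m]) ω ∂μ := integral_congr_ae hpull
    _ ≤ ∫ ω, c * P ω ∂μ := by
      refine integral_mono_ae (integrable_condExp.congr hpull) (hP_int.const_mul c) ?_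
      filter_upwards [hP0, hce] with ω h0 h
      simpa only [Pi.mul_apply, mul_comm c] using mul_le_mul_of_nonneg_left h h0
    _ = c * ∫ ω, P ω ∂μ := integral_const_mul c _

lemma integrable_exp_mul_sum [IsFiniteMeasure μ] {n : ℕ} {t : ℝ} (ht : 0 ≤ t)
    {g : Fin n → Ω → ℝ} (hg : ∀ i, Measurable (g i)) (hg1 : ∀ i ω, g i ω ≤ 1) :
    Integrable (fun ω => exp (t * ∑ i, g i ω)) μ :=
  integrable_exp_mul_of_le t n ht (Finset.measurable_sum _ fun i _ => hg i).aemeasurable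
    (.of_forall fun ω => (Finset.sum_le_card_nsmul _ _ 1 fun i _ => hg1 i ω).trans (by simp))

theorem mgf_sum_le_of_condExp_le [IsProbabilityMeasure μ] {t a : ℝ} (ht : 0 ≤ t) (ha : 0 ≤ a)
    {n : ℕ} (g : Fin n → Ω → ℝ) (m : Fin n → MeasurableSpace Ω) (hm : ∀ i, m i ≤ mΩ)
    (hg : ∀ i, Measurable (g i)) (hg0 : ∀ i ω, 0 ≤ g i ω) (hg1 : ∀ i ω, g i ω ≤ 1)
    (hadapted : ∀ i j, j < i → Measurable[m i] (g j))
    (hcond : ∀ i, μ[g i|m i] ≤ᵐ[μ] fun _ => a) :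
    mgf (fun ω => ∑ i, g i ω) μ t ≤ (1 + (exp t - 1) * a) ^ n := by
  induction n with
  | zero => simp [mgf]
  | succ n ih =>
    set P : Ω → ℝ := fun ω => exp (t * ∑ i : Fin n, g i.castSucc ω)
    set e : Ω → ℝ := fun ω => exp (t * g (Fin.last n) ω)
    have hsplit : (fun ω => exp (t * ∑ i, g i ω)) = P * e := by
      ext ω
      simp only [Fin.sum_univ_castSucc, mul_add, exp_add, Pi.mul_apply, P, e]
    have hP : StronglyMeasurable[m (Fin.last n)] P :=
      ((Finset.measurable_sum _ fun i _ => hadapted _ _ (Fin.castSucc_lt_last i)).const_mul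
        t).exp.stronglyMeasurable
    have he_int : Integrable e μ :=
      integrable_exp_mul_of_le t 1 ht (hg _).aemeasurable (.of_forall (hg1 _))
    have hce := condExp_exp_mul_le (hm _) ht (hg _) (hg0 _) (hg1 _) (hcond (Fin.last n))
    have hc : 0 ≤ 1 + (exp t - 1) * a := by nlinarith [one_le_exp ht]
    calc mgf (fun ω => ∑ i, g i ω) μ t = ∫ ω, (P * e) ω ∂μ := by rw [mgf, hsplit]
      _ ≤ (1 + (exp t - 1) * a) * ∫ ω, P ω ∂μ :=
        integral_mul_le_of_condExp_le (hm _) hP (.of_forall fun ω => (exp_pos _).le)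
          (integrable_exp_mul_sum ht (fun i => hg _) (fun i => hg1 _))
          (hsplit ▸ integrable_exp_mul_sum ht hg hg1) he_int hce
      _ ≤ (1 + (exp t - 1) * a) * (1 + (exp t - 1) * a) ^ n := by
        gcongr
        exact ih _ _ (fun i => hm _) (fun i => hg _) (fun i => hg0 _) (fun i => hg1 _)
          (fun i j hij => hadapted _ _ (Fin.castSucc_lt_castSucc_iff.2 hij)) (fun i => hcond _)
      _ = (1 + (exp t - 1) * a) ^ (n + 1) := (pow_succ' _ _).symm

theorem measureReal_mean_gt_le [IsProbabilityMeasure μ] {L : ℕ} (g : Fin L → Ω → ℝ)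
    (m : Fin L → MeasurableSpace Ω) (hm : ∀ i, m i ≤ mΩ)
    (hg : ∀ i, Measurable (g i)) (hg0 : ∀ i ω, 0 ≤ g i ω) (hg1 : ∀ i ω, g i ω ≤ 1)
    (hadapted : ∀ i j, j < i → Measurable[m i] (g j)) {a : ℝ} (ha : 0 ≤ a)
    (hcond : ∀ i, μ[g i|m i] ≤ᵐ[μ] fun _ => a) {τ : ℝ} (hτ : 0 < τ) :
    μ.real {ω | τ < (1 / L : ℝ) * ∑ i, g i ω} ≤ exp (-(L * (τ * log 2 - a))) := by
  have hlog : 0 ≤ log 2 := log_nonneg one_le_two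
  have hmgf : mgf (fun ω => ∑ i, g i ω) μ (log 2) ≤ (1 + a) ^ L := by
    convert mgf_sum_le_of_condExp_le hlog ha g m hm hg hg0 hg1 hadapted hcond using 4
    rw [exp_log two_pos]
    norm_num
  have hsub : {ω | τ < (1 / L : ℝ) * ∑ i, g i ω} ⊆ {ω | L * τ ≤ ∑ i, g i ω} := by
    intro ω hω
    rcases L.eq_zero_or_pos with rfl | hL
    · simp only [CharP.cast_eq_zero, div_zero, zero_mul, Set.mem_ofPred_eq] at hω
      linarith
    · rw [Set.mem_ofPred_eq, one_div, inv_mul_eq_div, lt_div_iff₀ (Nat.cast_pos.2 hL)] at hω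
      exact (mul_comm τ L ▸ hω).le
  calc μ.real {ω | τ < (1 / L : ℝ) * ∑ i, g i ω}
      ≤ μ.real {ω | L * τ ≤ ∑ i, g i ω} := measureReal_mono hsub
    _ ≤ exp (-log 2 * (L * τ)) * mgf (fun ω => ∑ i, g i ω) μ (log 2) :=
      measure_ge_le_exp_mul_mgf _ hlog (integrable_exp_mul_sum hlog hg hg1)
    _ ≤ exp (-log 2 * (L * τ)) * exp a ^ L := by
      gcongr
      exact hmgf.trans (pow_le_pow_left₀ (by linarith) (by linarith [add_one_le_exp a]) L)
    _ = exp (-(L * (τ * log 2 - a))) := by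
      rw [← exp_nat_mul, ← exp_add]
      ring_nf

end

/-- Martingale-type concentration lemma (Csiszár–Narayan, Lemma A1):
if `X₁,…,X_L` are random variables, `f i` is a `[0,1]`-valued measurable function of the
first `i+1` of them (indices `0`-based), and each conditional expectation
`E[f i (X₀,…,X i) | X₀,…,X (i−1)]` is a.s. at most `a`, then
`Pr[(1/L)·Σᵢ f i (X₀,…,X i) > τ] ≤ exp(−L(τ·ln 2 − a))` for every `τ > 0`. -/
theorem stmt8 {Ω : Type*} [MeasurableSpace Ω] (μ : Measure Ω) [IsProbabilityMeasure μ]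
    (L : ℕ) (X : Fin L → Ω → ℝ) (hX : ∀ i, Measurable (X i))
    (f : (i : Fin L) → (Fin (i.val + 1) → ℝ) → ℝ)
    (hf : ∀ i, Measurable (f i))
    (hf0 : ∀ i y, 0 ≤ f i y) (hf1 : ∀ i y, f i y ≤ 1)
    (a : ℝ) (ha : 0 < a)
    (hcond : ∀ i : Fin L,
      ∀ᵐ ω ∂μ,
        (μ[(fun ω' => f i (fun j => X (j.castLE i.isLt) ω')) |
            MeasurableSpace.comap
              (fun ω' => fun j : Fin i.val => X (j.castLE i.isLt.le) ω')
              MeasurableSpace.pi]) ω ≤ a) :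
    ∀ τ : ℝ, 0 < τ →
      (μ {ω | τ < (1 / L : ℝ) *
          ∑ i : Fin L, f i (fun j => X (j.castLE i.isLt) ω)}).toReal ≤
        Real.exp (-(L * (τ * Real.log 2 - a))) := by
  intro τ hτ
  set past : (i : Fin L) → Ω → Fin i.val → ℝ := fun i ω j => X (j.castLE i.isLt.le) ω
  have hpast : ∀ i, Measurable (past i) := fun i => measurable_pi_lambda _ fun j => hX _
  have hadapted : ∀ i j : Fin L, j < i → Measurable[MeasurableSpace.comap (past i)
      MeasurableSpace.pi] (fun ω => f j fun k => X (k.castLE j.isLt) ω) := by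
    intro i j hji
    have hji' : j.val + 1 ≤ i.val := hji
    exact show Measurable[MeasurableSpace.comap (past i) MeasurableSpace.pi]
        ((fun v : Fin i.val → ℝ => f j fun k => v (k.castLE hji')) ∘ past i) from
      ((hf j).comp (measurable_pi_lambda _ fun k => measurable_pi_apply _)).comp
        (comap_measurable _)
  exact measureReal_mean_gt_le _ _ (fun i => (hpast i).comap_le)
    (fun i => (hf i).comp (measurable_pi_lambda _ fun j => hX _))
    (fun i ω => hf0 i _) (fun i ω => hf1 i _) hadapted ha.le hcond hτ
end

section
/- Let n ≥ 1, M ≥ 2, σ² ≥ 0. Let Ψ and Ψ' be i.i.d. random maps from {1,…,M} to ℝⁿ (i.e., (Ψ(1),…,Ψ(M)) and (Ψ'(1),…,Ψ'(M)) are independent and identically distributed random vectors), and let V be a vector of n i.i.d. N(0,σ²) coordinates independent of (Ψ, Ψ'). Then for every measurable decoder φ : ℝⁿ → {0,1,…,M} and all i ≠ j in {1,…,M}: Pr[ φ(Ψ(i) + Ψ'(j) + V) ≠ i ] + Pr[ φ(Ψ(j) + Ψ'(i) + V) ≠ j ] ≥ 1. -/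
/-! Swapping the two independent, identically distributed encoders does not change the joint law
of `(Ψ, Ψ', V)`, so the observation `Ψ(i) + Ψ'(j) + V` meant for `i` has the same law as the
spoofed observation `Ψ(j) + Ψ'(i) + V` meant for `j`. A single decoder output cannot equal both
`i` and `j`, so the two error events cover the whole space. -/

open MeasureTheory ProbabilityTheory Real Filter
open scoped InnerProductSpace ENNReal NNReal

namespace ProbabilityTheory

variable {Ω E F G : Type*} {mΩ : MeasurableSpace Ω} {mE : MeasurableSpace E}
  {mF : MeasurableSpace F} {mG : MeasurableSpace G} {μ : Measure Ω}

lemma IdentDistrib.prodMk_swap [IsFiniteMeasure μ] {X Y : Ω → E}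
    (h : IdentDistrib X Y μ μ) (hXY : X ⟂ᵢ[μ] Y) :
    IdentDistrib (fun ω ↦ (X ω, Y ω)) (fun ω ↦ (Y ω, X ω)) μ μ :=
  h.prodMk h.symm hXY hXY.symm

lemma IdentDistrib.comp_swap_of_indepFun [IsFiniteMeasure μ] {X Y : Ω → E} {V : Ω → F}
    (h : IdentDistrib X Y μ μ) (hXY : X ⟂ᵢ[μ] Y) (hV : AEMeasurable V μ)
    (hXYV : (fun ω ↦ (X ω, Y ω)) ⟂ᵢ[μ] V) {u : E → E → F → G}
    (hu : Measurable fun p : (E × E) × F ↦ u p.1.1 p.1.2 p.2) :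
    IdentDistrib (fun ω ↦ u (X ω) (Y ω) (V ω)) (fun ω ↦ u (Y ω) (X ω) (V ω)) μ μ :=
  ((h.prodMk_swap hXY).prodMk (.refl hV) hXYV
    (hXYV.comp measurable_swap measurable_id)).comp hu

end ProbabilityTheory

lemma MeasureTheory.one_le_measureReal_ne_add_measureReal_ne {Ω β : Type*}
    [MeasurableSpace Ω] (μ : Measure Ω) [IsProbabilityMeasure μ] (f : Ω → β) {a b : β}
    (hab : a ≠ b) : 1 ≤ μ.real {ω | f ω ≠ a} + μ.real {ω | f ω ≠ b} := by
  have hcover : {ω | f ω ≠ a} ∪ {ω | f ω ≠ b} = Set.univ := by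
    ext ω
    simp only [Set.mem_union, Set.mem_ofPred_eq, Set.mem_univ, iff_true]
    by_contra! h
    exact hab (h.1.symm.trans h.2)
  calc (1 : ℝ) = μ.real ({ω | f ω ≠ a} ∪ {ω | f ω ≠ b}) := by rw [hcover, probReal_univ]
    _ ≤ _ := measureReal_union_le _ _

-- The decoder output `0` is the error symbol; message `i` is decoded as `i.val + 1`.
theorem stmt15_general {Ω : Type*} [MeasurableSpace Ω] (μ : Measure Ω) [IsProbabilityMeasure μ]
    (n M : ℕ)
    (Ψ Ψ' : Ω → Fin M → EuclideanSpace ℝ (Fin n)) (V : Ω → EuclideanSpace ℝ (Fin n))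
    (hΨ : Measurable Ψ) (hΨ' : Measurable Ψ') (hV : Measurable V)
    (hindep : IndepFun Ψ Ψ' μ)
    (hident : Measure.map Ψ μ = Measure.map Ψ' μ)
    (hVindep : IndepFun (fun ω => (Ψ ω, Ψ' ω)) V μ)
    (φ : EuclideanSpace ℝ (Fin n) → ℕ) (hφ : Measurable φ)
    (i j : Fin M) (hij : i ≠ j) :
    1 ≤ (μ {ω | φ (Ψ ω i + Ψ' ω j + V ω) ≠ i.val + 1}).toReal +
        (μ {ω | φ (Ψ ω j + Ψ' ω i + V ω) ≠ j.val + 1}).toReal := by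
  have hobs : IdentDistrib (fun ω ↦ Ψ ω i + Ψ' ω j + V ω) (fun ω ↦ Ψ' ω i + Ψ ω j + V ω) μ μ :=
    IdentDistrib.comp_swap_of_indepFun ⟨hΨ.aemeasurable, hΨ'.aemeasurable, hident⟩ hindep
      hV.aemeasurable hVindep (u := fun a b v ↦ a i + b j + v) (by fun_prop)
  have hspoof : μ {ω | φ (Ψ ω j + Ψ' ω i + V ω) ≠ j.val + 1}
      = μ {ω | φ (Ψ ω i + Ψ' ω j + V ω) ≠ j.val + 1} := by
    simp_rw [add_comm (Ψ _ j) (Ψ' _ i)]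
    exact (hobs.measure_mem_eq (hφ (measurableSet_singleton _)).compl).symm
  rw [hspoof]
  exact one_le_measureReal_ne_add_measureReal_ne μ (fun ω ↦ φ (Ψ ω i + Ψ' ω j + V ω))
    (by simpa [Fin.val_inj] using hij)

/-- Spoofing symmetry inequality: if `Ψ` and `Ψ'` are i.i.d. random maps
from messages to `ℝⁿ` (independent, with the same law) and `V` is an independent vector of
`n` i.i.d. `N(0,σ²)` coordinates, then for every measurable decoder `φ` (output `0` denoting
an error, message `i : Fin M` corresponding to output `i+1`) and all messages `i ≠ j`,
`Pr[φ(Ψ(i)+Ψ'(j)+V) ≠ i] + Pr[φ(Ψ(j)+Ψ'(i)+V) ≠ j] ≥ 1`. -/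
theorem stmt15 {Ω : Type*} [MeasurableSpace Ω] (μ : Measure Ω) [IsProbabilityMeasure μ]
    (n M : ℕ) (hn : 1 ≤ n) (hM : 2 ≤ M) (σ2 : ℝ) (hσ : 0 ≤ σ2)
    (Ψ Ψ' : Ω → Fin M → EuclideanSpace ℝ (Fin n)) (V : Ω → EuclideanSpace ℝ (Fin n))
    (hΨ : Measurable Ψ) (hΨ' : Measurable Ψ') (hV : Measurable V)
    (hindep : IndepFun Ψ Ψ' μ)
    (hident : Measure.map Ψ μ = Measure.map Ψ' μ)
    (hVlaw : Measure.map V μ = gaussianVec n σ2)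
    (hVindep : IndepFun (fun ω => (Ψ ω, Ψ' ω)) V μ)
    (φ : EuclideanSpace ℝ (Fin n) → ℕ) (hφ : Measurable φ) (hφM : ∀ y, φ y ≤ M)
    (i j : Fin M) (hij : i ≠ j) :
    1 ≤ (μ {ω | φ (Ψ ω i + Ψ' ω j + V ω) ≠ i.val + 1}).toReal +
        (μ {ω | φ (Ψ ω j + Ψ' ω i + V ω) ≠ j.val + 1}).toReal :=
  stmt15_general μ n M Ψ Ψ' V hΨ hΨ' hV hindep hident hVindep φ hφ i j hij
end

section
/- Let n ≥ 1, M ≥ 2, σ² ≥ 0. Let Ψ and Ψ' be i.i.d. random maps from {1,…,M} to ℝⁿ, and let V be a vector of n i.i.d. N(0,σ²) coordinates independent of (Ψ, Ψ'). For a fixed vector s ∈ ℝⁿ write e(s,i) = Pr_{Ψ,V}[ φ(Ψ(i) + s + V) ≠ i ] and e_max(s) = max_{1 ≤ i ≤ M} e(s,i), where φ : ℝⁿ → {0,1,…,M} is any measurable decoder. Then (1/M)·Σ_{j=1}^{M} E[ e_max(Ψ'(j)) ] ≥ (M−1)/(2M) ≥ 1/4. -/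
open MeasureTheory ProbabilityTheory Real Filter
open scoped InnerProductSpace ENNReal NNReal

/-!
Let `κ` be the common law of `Ψ` and `Ψ'`, and `γ` that of `V`. Then `E e(Ψ'(j), i)` is the
probability, under `κ ⊗ κ ⊗ γ`, that `c(i) + c'(j) + v` is not decoded as `i`. Exchanging the
codebooks `c, c'` preserves `κ ⊗ κ ⊗ γ`, so `E e(Ψ'(i), j)` is the probability that the same
signal is not decoded as `j`; as it cannot be decoded both as `i` and as `j` when `i ≠ j`,
`E e(Ψ'(j), i) + E e(Ψ'(i), j) ≥ 1`. Since `e_max` dominates every `e(·, i)`, any two of the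
numbers `E e_max(Ψ'(j))` sum to at least `1`, so all `M` of them sum to at least `(M - 1) / 2`.
-/

theorem measurePreserving_prodLeftComm {α β : Type*} [MeasurableSpace α] [MeasurableSpace β]
    (κ : Measure α) (γ : Measure β) [SFinite κ] [SFinite γ] :
    MeasurePreserving (fun p : α × α × β => (p.2.1, p.1, p.2.2))
      (κ.prod (κ.prod γ)) (κ.prod (κ.prod γ)) :=
  ((measurePreserving_prodAssoc κ κ γ).comp
    (Measure.measurePreserving_swap.prod (MeasurePreserving.id γ))).comp
    (measurePreserving_prodAssoc κ κ γ).symm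

theorem card_sub_one_div_two_le_sum {ι : Type*} [Fintype ι] {b : ι → ℝ} (hb : ∀ i, 0 ≤ b i)
    (hpair : ∀ i j, i ≠ j → 1 ≤ b i + b j) :
    ((Fintype.card ι : ℝ) - 1) / 2 ≤ ∑ i, b i := by
  classical
  have hpoint : ∀ i j, (1 - if i = j then 1 else 0 : ℝ) ≤ b i + b j := by
    intro i j
    split_ifs with h
    · linarith [hb i, hb j]
    · simpa using hpair i j h
  have hdouble :
      (Fintype.card ι : ℝ) * (Fintype.card ι - 1) ≤ 2 * Fintype.card ι * ∑ i, b i :=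
    calc (Fintype.card ι : ℝ) * (Fintype.card ι - 1)
        = ∑ i : ι, ∑ j : ι, (1 - if i = j then 1 else 0 : ℝ) := by
          simp [Finset.sum_sub_distrib, mul_sub]
      _ ≤ ∑ i : ι, ∑ j : ι, (b i + b j) := by gcongr with i _ j _; exact hpoint i j
      _ = 2 * Fintype.card ι * ∑ i, b i := by
          simp only [Finset.sum_add_distrib, Finset.sum_const, Finset.card_univ, nsmul_eq_mul,
            ← Finset.mul_sum]
          ring
  rcases (Nat.cast_nonneg (Fintype.card ι) : (0 : ℝ) ≤ _).eq_or_lt with hcard | hcard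
  · rw [← hcard]
    linarith [Finset.sum_nonneg fun i (_ : i ∈ Finset.univ) => hb i]
  · rw [div_le_iff₀ two_pos]
    nlinarith

section Spoofing

variable {ι E : Type*} [MeasurableSpace E] [AddCommMonoid E]

/-- The paper's `e(s, i)`, for a codebook with law `κ`, noise with law `γ`, and decoding
regions `D`. -/
noncomputable def errorProb (κ : Measure (ι → E)) (γ : Measure E) (D : ι → Set E) (s : E)
    (i : ι) : ℝ≥0∞ :=
  (κ.prod γ) {p | p.1 i + s + p.2 ∉ D i}

variable [MeasurableAdd₂ E] {κ : Measure (ι → E)} {γ : Measure E} {D : ι → Set E}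

theorem measurable_errorProb [SFinite κ] [SFinite γ] {i : ι} (hD : MeasurableSet (D i)) :
    Measurable fun s => errorProb κ γ D s i :=
  measurable_measure_prodMk_left (ν := κ.prod γ)
    (s := {q : E × (ι → E) × E | q.2.1 i + q.1 + q.2.2 ∉ D i}) (hD.preimage (by fun_prop)).compl

theorem lintegral_errorProb [SFinite κ] [SFinite γ] {i : ι} (hD : MeasurableSet (D i)) (j : ι) :
    ∫⁻ c, errorProb κ γ D (c j) i ∂κ =
      (κ.prod (κ.prod γ)) {p | p.2.1 i + p.1 j + p.2.2 ∉ D i} :=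
  (Measure.prod_apply (s := {p : (ι → E) × (ι → E) × E | p.2.1 i + p.1 j + p.2.2 ∉ D i})
    (hD.preimage (by fun_prop)).compl).symm

theorem one_le_lintegral_errorProb_add [IsProbabilityMeasure κ] [IsProbabilityMeasure γ]
    {i j : ι} (hDi : MeasurableSet (D i)) (hDj : MeasurableSet (D j))
    (hdisj : Disjoint (D i) (D j)) :
    1 ≤ ∫⁻ c, errorProb κ γ D (c j) i ∂κ + ∫⁻ c, errorProb κ γ D (c i) j ∂κ := by
  set ν := κ.prod (κ.prod γ)
  set y : (ι → E) × (ι → E) × E → E := fun p => p.2.1 i + p.1 j + p.2.2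
  have hswap : ν {p | p.2.1 j + p.1 i + p.2.2 ∉ D j} = ν {p | y p ∉ D j} := by
    have hS : MeasurableSet {p : (ι → E) × (ι → E) × E | p.2.1 j + p.1 i + p.2.2 ∉ D j} :=
      (hDj.preimage (by fun_prop)).compl
    rw [← (measurePreserving_prodLeftComm κ γ).measure_preimage hS.nullMeasurableSet]
    congr 1
    ext p
    simp only [Set.mem_preimage, Set.mem_ofPred_eq, y, add_comm (p.1 j) (p.2.1 i)]
  rw [lintegral_errorProb hDi, lintegral_errorProb hDj, hswap]
  calc 1 = ν ({p | y p ∉ D i} ∪ {p | y p ∉ D j}) := by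
        rw [← measure_univ (μ := ν)]
        congr 1
        ext p
        simp only [Set.mem_univ, Set.mem_union, Set.mem_ofPred_eq, true_iff]
        by_contra! h
        exact Set.disjoint_left.1 hdisj h.1 h.2
    _ ≤ _ := measure_union_le _ _

theorem errorProb_map_eq {Ω : Type*} [MeasurableSpace Ω] {μ : Measure Ω} [IsFiniteMeasure μ]
    {X : Ω → ι → E} {Z : Ω → E} (hX : Measurable X) (hZ : Measurable Z) (hXZ : IndepFun X Z μ)
    {i : ι} (hD : MeasurableSet (D i)) (s : E) :
    errorProb (μ.map X) (μ.map Z) D s i = μ {ω | X ω i + s + Z ω ∉ D i} := by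
  have hS : MeasurableSet {p : (ι → E) × E | p.1 i + s + p.2 ∉ D i} :=
    (hD.preimage (by fun_prop)).compl
  rw [errorProb, ← hXZ.map_prod_eq_prod_map_map hX.aemeasurable hZ.aemeasurable,
    Measure.map_apply (hX.prodMk hZ) hS]
  rfl

variable {Ω : Type*} [MeasurableSpace Ω] {μ : Measure Ω} [IsProbabilityMeasure μ]
  {Y : Ω → ι → E}

theorem lintegral_errorProb_toReal_le_integral_iSup [Finite ι] [IsProbabilityMeasure κ]
    [IsProbabilityMeasure γ] (hY : Measurable Y) (hYκ : μ.map Y = κ)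
    (hD : ∀ i, MeasurableSet (D i)) (i j : ι) :
    (∫⁻ c, errorProb κ γ D (c j) i ∂κ).toReal ≤
      ∫ ω, ⨆ i', (errorProb κ γ D (Y ω j) i').toReal ∂μ := by
  have hle : ∀ s i, errorProb κ γ D s i ≤ 1 := fun _ _ => prob_le_one
  have hle' : ∀ s i, (errorProb κ γ D s i).toReal ≤ 1 := fun s i =>
    ENNReal.toReal_le_of_le_ofReal zero_le_one (by simpa using hle s i)
  have hmeas : ∀ i, Measurable fun ω => (errorProb κ γ D (Y ω j) i).toReal := fun i =>
    ((measurable_errorProb (hD i)).comp ((measurable_pi_apply j).comp hY)).ennreal_toReal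
  have hint : ∀ f : Ω → ℝ, Measurable f → (∀ ω, 0 ≤ f ω ∧ f ω ≤ 1) → Integrable f μ :=
    fun f hf hf01 => Integrable.of_bound hf.aestronglyMeasurable 1 <| ae_of_all _ fun ω => by
      rw [Real.norm_of_nonneg (hf01 ω).1]; exact (hf01 ω).2
  have hcj : Measurable fun c : ι → E => errorProb κ γ D (c j) i :=
    (measurable_errorProb (hD i)).comp (measurable_pi_apply j)
  calc (∫⁻ c, errorProb κ γ D (c j) i ∂κ).toReal
      = ∫ c, (errorProb κ γ D (c j) i).toReal ∂κ :=
        (integral_toReal hcj.aemeasurable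
          (ae_of_all _ fun c => (hle (c j) i).trans_lt ENNReal.one_lt_top)).symm
    _ = ∫ ω, (errorProb κ γ D (Y ω j) i).toReal ∂μ := by
        subst hYκ
        exact integral_map hY.aemeasurable hcj.ennreal_toReal.aestronglyMeasurable
    _ ≤ ∫ ω, ⨆ i', (errorProb κ γ D (Y ω j) i').toReal ∂μ := by
        refine integral_mono (hint _ (hmeas i) fun ω => ⟨ENNReal.toReal_nonneg, hle' _ _⟩)
          (hint _ (Measurable.iSup hmeas) fun ω => ⟨?_, ?_⟩) fun ω => ?_
        · exact Real.iSup_nonneg fun _ => ENNReal.toReal_nonneg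
        · exact Real.iSup_le (fun _ => hle' _ _) zero_le_one
        · exact le_ciSup (Set.finite_range fun i' => (errorProb κ γ D (Y ω j) i').toReal).bddAbove i

theorem one_le_integral_iSup_errorProb_add [Finite ι] [IsProbabilityMeasure κ]
    [IsProbabilityMeasure γ] (hY : Measurable Y) (hYκ : μ.map Y = κ)
    (hD : ∀ i, MeasurableSet (D i)) {i j : ι} (hdisj : Disjoint (D i) (D j)) :
    1 ≤ ∫ ω, ⨆ i', (errorProb κ γ D (Y ω i) i').toReal ∂μ +
      ∫ ω, ⨆ i', (errorProb κ γ D (Y ω j) i').toReal ∂μ := by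
  have hfin : ∀ i j, ∫⁻ c, errorProb κ γ D (c j) i ∂κ ≠ ∞ := fun i j => by
    rw [lintegral_errorProb (hD i)]
    exact measure_ne_top _ _
  have h := ENNReal.toReal_mono (ENNReal.add_ne_top.2 ⟨hfin _ _, hfin _ _⟩)
    (one_le_lintegral_errorProb_add (hD i) (hD j) hdisj)
  rw [ENNReal.toReal_add (hfin _ _) (hfin _ _), ENNReal.toReal_one] at h
  linarith [lintegral_errorProb_toReal_le_integral_iSup (γ := γ) hY hYκ hD i j,
    lintegral_errorProb_toReal_le_integral_iSup (γ := γ) hY hYκ hD j i]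

end Spoofing

theorem stmt16_general {Ω : Type*} [MeasurableSpace Ω] (μ : Measure Ω) [IsProbabilityMeasure μ]
    (n M : ℕ) (hM : 2 ≤ M)
    (Ψ Ψ' : Ω → Fin M → EuclideanSpace ℝ (Fin n)) (V : Ω → EuclideanSpace ℝ (Fin n))
    (hΨ : Measurable Ψ) (hΨ' : Measurable Ψ') (hV : Measurable V)
    (hident : Measure.map Ψ μ = Measure.map Ψ' μ)
    (hVindep : IndepFun (fun ω => (Ψ ω, Ψ' ω)) V μ)
    (φ : EuclideanSpace ℝ (Fin n) → ℕ) (hφ : Measurable φ) :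
    (1 / 4 : ℝ) ≤ ((M : ℝ) - 1) / (2 * M) ∧
    ((M : ℝ) - 1) / (2 * M) ≤ (1 / M : ℝ) * ∑ j : Fin M,
      ∫ ω, (⨆ i : Fin M,
        (μ {ω' | φ (Ψ ω' i + Ψ' ω j + V ω') ≠ i.val + 1}).toReal) ∂μ := by
  have hM' : (2 : ℝ) ≤ M := by exact_mod_cast hM
  refine ⟨by rw [div_le_div_iff₀ (by norm_num) (by positivity)]; linarith, ?_⟩
  have := Measure.isProbabilityMeasure_map (μ := μ) hΨ.aemeasurable
  have := Measure.isProbabilityMeasure_map (μ := μ) hV.aemeasurable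
  let D : Fin M → Set (EuclideanSpace ℝ (Fin n)) := fun i => φ ⁻¹' {i.val + 1}
  have hD : ∀ i, MeasurableSet (D i) := fun i => hφ (measurableSet_singleton _)
  have he : ∀ s i, μ {ω' | φ (Ψ ω' i + s + V ω') ≠ i.val + 1} =
      errorProb (μ.map Ψ) (μ.map V) D s i := fun s i =>
    (errorProb_map_eq hΨ hV (hVindep.comp measurable_fst measurable_id) (hD i) s).symm
  simp_rw [he]
  set b : Fin M → ℝ := fun j =>
    ∫ ω, ⨆ i, (errorProb (μ.map Ψ) (μ.map V) D (Ψ' ω j) i).toReal ∂μ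
  have hb : ∀ j, 0 ≤ b j := fun j =>
    integral_nonneg fun ω => Real.iSup_nonneg fun _ => ENNReal.toReal_nonneg
  have hpair : ∀ i j, i ≠ j → 1 ≤ b i + b j := fun i j hij =>
    one_le_integral_iSup_errorProb_add hΨ' hident.symm hD <| Set.disjoint_left.2 fun _ hi hj =>
      hij (Fin.val_injective (Nat.succ_injective (hi.symm.trans hj)))
  have hsum := card_sub_one_div_two_le_sum hb hpair
  rw [Fintype.card_fin] at hsum
  calc ((M : ℝ) - 1) / (2 * M) = (1 / M) * (((M : ℝ) - 1) / 2) := by field_simp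
    _ ≤ _ := by gcongr

/-- Averaged spoofing bound: with `Ψ, Ψ'` i.i.d. random encoders and `V`
an independent vector of `n` i.i.d. `N(0,σ²)` coordinates, writing
`e(s,i) = Pr_{Ψ,V}[φ(Ψ(i)+s+V) ≠ i]` and `e_max(s) = max_i e(s,i)` (here the `max` over the
nonempty finite type `Fin M` is expressed as `⨆ i`), the average over the spoofed message
`j` of `E[e_max(Ψ'(j))]` is at least `(M−1)/(2M)`, which is at least `1/4`. The decoder `φ`
outputs `0` for an error and `i+1` for message `i : Fin M`. -/
theorem stmt16 {Ω : Type*} [MeasurableSpace Ω] (μ : Measure Ω) [IsProbabilityMeasure μ]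
    (n M : ℕ) (hn : 1 ≤ n) (hM : 2 ≤ M) (σ2 : ℝ) (hσ : 0 ≤ σ2)
    (Ψ Ψ' : Ω → Fin M → EuclideanSpace ℝ (Fin n)) (V : Ω → EuclideanSpace ℝ (Fin n))
    (hΨ : Measurable Ψ) (hΨ' : Measurable Ψ') (hV : Measurable V)
    (hindep : IndepFun Ψ Ψ' μ)
    (hident : Measure.map Ψ μ = Measure.map Ψ' μ)
    (hVlaw : Measure.map V μ = gaussianVec n σ2)
    (hVindep : IndepFun (fun ω => (Ψ ω, Ψ' ω)) V μ)
    (φ : EuclideanSpace ℝ (Fin n) → ℕ) (hφ : Measurable φ) (hφM : ∀ y, φ y ≤ M) :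
    (1 / 4 : ℝ) ≤ ((M : ℝ) - 1) / (2 * M) ∧
    ((M : ℝ) - 1) / (2 * M) ≤ (1 / M : ℝ) * ∑ j : Fin M,
      ∫ ω, (⨆ i : Fin M,
        (μ {ω' | φ (Ψ ω' i + Ψ' ω j + V ω') ≠ i.val + 1}).toReal) ∂μ :=
  stmt16_general μ n M hM Ψ Ψ' V hΨ hΨ' hV hident hVindep φ hφ
end
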